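/- arXiv:1111.7246 — 2 statements merged into one kernel-verified Lean document; each statement's English description precedes it below -/
import Mathlib

section
/- Let Q be a connected Laplacian matrix on V = {0,…,n} with Laplacian lattice L_G, and let m = (1/2)·Σ_{i≠j} b_{ij} be the number of edges of the multigraph and g = m − n its genus. Then the covering radius of L_G under the simplicial distance function, Cov_△(L_G) = inf{R ≥ 0 : for every p ∈ H_0 there exists q ∈ L_G with d_△(q,p) ≤ R}, equals (g+n)/(n+1) = m/(n+1). -/
/-! Lattice vectors are the `f ᵥ* Q` for integer potentials `f`, and `d_△(f ᵥ* Q, p) ≤ R` says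
`f ᵥ* Q ≤ ⌊p + R⌋` coordinatewise, i.e. that the divisor `⌊p + R⌋` is equivalent to an effective
one. Let `m` be the number of edges and `g = m - n` the genus. Every divisor of degree at least `g`
is equivalent to an effective divisor: its `q`-reduced representative comes from a maximal
potential, and Dhar's burning algorithm bounds its degree away from `q` by `g`. Since
`⌊p + m/(n+1)⌋` has degree at least `g`, the covering radius is at most `m/(n+1)`. Conversely,
Baker–Norine's divisor `ν_<` of degree `g - 1` is not equivalent to an effective divisor, so its
projection to `H_0` is at distance at least `m/(n+1)` from the lattice. -/

open Finset

/-- A Laplacian matrix of a multigraph on vertex set `Fin (n+1)`: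
symmetric, nonpositive off-diagonal entries, all row sums zero. -/
def IsLaplacian (n : ℕ) (Q : Matrix (Fin (n+1)) (Fin (n+1)) ℤ) : Prop :=
  (∀ i j, Q i j = Q j i) ∧ (∀ i j, i ≠ j → Q i j ≤ 0) ∧ (∀ i, ∑ j, Q i j = 0)

/-- A connected Laplacian matrix: the graph with an edge `{i,j}` whenever
`b_{ij} = -Q i j > 0` is connected. -/
def IsConnectedLaplacian (n : ℕ) (Q : Matrix (Fin (n+1)) (Fin (n+1)) ℤ) : Prop :=
  IsLaplacian n Q ∧ (SimpleGraph.fromRel (fun i j => Q i j ≠ 0)).Connected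

/-- The Laplacian lattice: the subgroup of `ℤ^{n+1}` generated by the rows of `Q`. -/
noncomputable def lapLattice (n : ℕ) (Q : Matrix (Fin (n+1)) (Fin (n+1)) ℤ) :
    AddSubgroup (Fin (n+1) → ℤ) :=
  AddSubgroup.closure (Set.range fun i => Q i)

/-- The hyperplane `H_0 = {x ∈ ℝ^{n+1} : ∑ x i = 0}`. -/
def H0 (n : ℕ) : Set (Fin (n+1) → ℝ) := {x | ∑ i, x i = 0}

/-- The simplicial distance function on `H_0`: `d_△(p,q) = max_i (p i - q i)`. -/
noncomputable def simpDist (n : ℕ) (p q : Fin (n+1) → ℝ) : ℝ :=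
  Finset.univ.sup' Finset.univ_nonempty fun i => p i - q i

/-- Coercion of an integer vector to a real vector. -/
noncomputable def intVec (n : ℕ) (q : Fin (n+1) → ℤ) : Fin (n+1) → ℝ := fun i => (q i : ℝ)

/-- The root lattice `A_n = {x ∈ ℤ^{n+1} : ∑ x i = 0}`. -/
def rootLattice (n : ℕ) : AddSubgroup (Fin (n+1) → ℤ) where
  carrier := {x | ∑ i, x i = 0}
  add_mem' := by
    intro a b ha hb
    simp only [Set.mem_setOf_eq, Pi.add_apply, Finset.sum_add_distrib] at *
    omega
  zero_mem' := by simp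
  neg_mem' := by
    intro a ha
    simp only [Set.mem_setOf_eq, Pi.neg_apply, Finset.sum_neg_distrib] at *
    omega

/-- The `i`-th row of `Q` as a real vector. -/
noncomputable def rowVec (n : ℕ) (Q : Matrix (Fin (n+1)) (Fin (n+1)) ℤ) (i : Fin (n+1)) :
    Fin (n+1) → ℝ := fun j => (Q i j : ℝ)

/-- `u^σ_k = b_{σ(0)} + ⋯ + b_{σ(k)}`. -/
noncomputable def uPerm (n : ℕ) (Q : Matrix (Fin (n+1)) (Fin (n+1)) ℤ)
    (σ : Equiv.Perm (Fin (n+1))) (k : Fin (n+1)) : Fin (n+1) → ℝ :=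
  ∑ j ∈ Finset.Iic k, rowVec n Q (σ j)

/-- The Delaunay polytope of the origin: the union over all permutations `σ`
of the simplices `△_σ = conv{u^σ_0, …, u^σ_n}`. -/
noncomputable def HDel (n : ℕ) (Q : Matrix (Fin (n+1)) (Fin (n+1)) ℤ) :
    Set (Fin (n+1) → ℝ) :=
  ⋃ σ : Equiv.Perm (Fin (n+1)), convexHull ℝ (Set.range (uPerm n Q σ))

/-- `u_S = ∑_{i ∈ S} b_i`, as a real vector. -/
noncomputable def uCut (n : ℕ) (Q : Matrix (Fin (n+1)) (Fin (n+1)) ℤ)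
    (S : Finset (Fin (n+1))) : Fin (n+1) → ℝ := ∑ i ∈ S, rowVec n Q i

open Matrix

namespace Laplacian

section

variable {V : Type*} {Q : Matrix V V ℤ}

theorem sum_neg_nonneg_of_notMem (hoff : ∀ i j, i ≠ j → Q i j ≤ 0) {S : Finset V} {v : V}
    (hv : v ∉ S) : 0 ≤ ∑ u ∈ S, -Q v u :=
  sum_nonneg fun u hu => neg_nonneg.2 (hoff v u fun h => hv (h ▸ hu))

theorem neg_le_sum_neg_of_mem (hoff : ∀ i j, i ≠ j → Q i j ≤ 0) {S : Finset V} {u v : V}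
    (hv : v ∉ S) (hu : u ∈ S) : -Q v u ≤ ∑ i ∈ S, -Q v i :=
  single_le_sum (fun i hi => neg_nonneg.2 (hoff v i fun h => hv (h ▸ hi))) hu

theorem exists_edge_leaving (hsym : Q.IsSymm) (hoff : ∀ i j, i ≠ j → Q i j ≤ 0)
    (hconn : (SimpleGraph.fromRel fun i j => Q i j ≠ 0).Connected) {T : Finset V} {x y : V}
    (hx : x ∈ T) (hy : y ∉ T) : ∃ a ∈ T, ∃ b ∉ T, 1 ≤ -Q a b := by
  obtain ⟨d, -, hd, hd'⟩ :=
    (hconn.preconnected x y).some.exists_boundary_dart (T : Set V) hx hy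
  obtain ⟨hne, hQ⟩ := (SimpleGraph.fromRel_adj _ _ _).1 d.adj
  have hQ' : Q d.fst d.snd ≠ 0 := hQ.elim id fun h => hsym.apply d.fst d.snd ▸ h
  exact ⟨_, hd, _, hd', by have := hoff _ _ hne; omega⟩

theorem sum_sum_insert [DecidableEq V] (hsym : Q.IsSymm) {A : Finset V} {v : V} (hv : v ∉ A) :
    ∑ x ∈ insert v A, ∑ u ∈ insert v A, Q x u =
      ∑ x ∈ A, ∑ u ∈ A, Q x u + Q v v + 2 * ∑ u ∈ A, Q v u := by
  simp only [sum_insert hv, sum_add_distrib]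
  have : ∑ x ∈ A, Q x v = ∑ u ∈ A, Q v u := sum_congr rfl fun x _ => hsym.apply v x
  rw [this]
  ring

variable [Fintype V]

theorem vecMul_apply_eq_sum (hsym : Q.IsSymm) (hrow : ∀ i, ∑ j, Q i j = 0) (f : V → ℤ)
    (v : V) : (f ᵥ* Q) v = ∑ i, -Q v i * (f v - f i) := by
  have h : ∑ i, -Q v i * (f v - f i) = ∑ i, f i * Q i v - f v * ∑ i, Q v i := by
    simp only [mul_sum, ← sum_sub_distrib]
    refine sum_congr rfl fun i _ => ?_
    rw [hsym.apply v i]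
    ring
  rw [h, hrow, mul_zero, sub_zero]
  rfl

theorem sum_vecMul_eq_zero (hrow : ∀ i, ∑ j, Q i j = 0) (f : V → ℤ) : ∑ v, (f ᵥ* Q) v = 0 := by
  simp only [vecMul, dotProduct]
  rw [sum_comm]
  simp [← mul_sum, hrow]

variable [DecidableEq V]

theorem diag_eq_sum_erase (hrow : ∀ i, ∑ j, Q i j = 0) (i : V) :
    Q i i = ∑ j ∈ univ.erase i, -Q i j := by
  rw [sum_neg_distrib, sum_erase_eq_sub (mem_univ i), hrow]
  ring

theorem trace_nonneg (hoff : ∀ i j, i ≠ j → Q i j ≤ 0) (hrow : ∀ i, ∑ j, Q i j = 0) :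
    0 ≤ Q.trace :=
  sum_nonneg fun i _ => by
    rw [diag_apply, diag_eq_sum_erase hrow i]
    exact sum_neg_nonneg_of_notMem hoff (notMem_erase i univ)

theorem indicator_vecMul_of_mem (hsym : Q.IsSymm) (hrow : ∀ i, ∑ j, Q i j = 0)
    {T : Finset V} {v : V} (hv : v ∈ T) :
    ((T : Set V).indicator 1 ᵥ* Q) v = ∑ i ∈ Tᶜ, -Q v i := by
  rw [vecMul_apply_eq_sum hsym hrow, ← sum_add_sum_compl T]
  have hT : ∀ i ∈ T, -Q v i * (1 - (T : Set V).indicator 1 i) = 0 := fun i hi => by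
    simp [Set.indicator_of_mem (mem_coe.2 hi)]
  have hTc : ∀ i ∈ Tᶜ, -Q v i * (1 - (T : Set V).indicator 1 i) = -Q v i := fun i hi => by
    simp [Set.indicator_of_notMem (mt mem_coe.1 (mem_compl.1 hi))]
  rw [Set.indicator_of_mem (mem_coe.2 hv), Pi.one_apply, sum_congr rfl hT, sum_congr rfl hTc,
    sum_const_zero, zero_add]

theorem indicator_vecMul_of_notMem (hsym : Q.IsSymm) (hrow : ∀ i, ∑ j, Q i j = 0)
    {T : Finset V} {v : V} (hv : v ∉ T) :
    ((T : Set V).indicator 1 ᵥ* Q) v = ∑ i ∈ T, Q v i := by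
  rw [vecMul_apply_eq_sum hsym hrow, ← sum_add_sum_compl T]
  have hT : ∀ i ∈ T, -Q v i * (0 - (T : Set V).indicator 1 i) = Q v i := fun i hi => by
    simp [Set.indicator_of_mem (mem_coe.2 hi)]
  have hTc : ∀ i ∈ Tᶜ, -Q v i * (0 - (T : Set V).indicator 1 i) = 0 := fun i hi => by
    simp [Set.indicator_of_notMem (mt mem_coe.1 (mem_compl.1 hi))]
  rw [Set.indicator_of_notMem (mt mem_coe.1 hv), sum_congr rfl hT, sum_congr rfl hTc,
    sum_const_zero, add_zero]

theorem sum_vecMul_eq_sum_sum_compl (hsym : Q.IsSymm) (hrow : ∀ i, ∑ j, Q i j = 0)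
    (f : V → ℤ) (B : Finset V) :
    ∑ x ∈ B, (f ᵥ* Q) x = ∑ x ∈ B, ∑ i ∈ Bᶜ, -Q x i * (f x - f i) := by
  have hB : ∑ x ∈ B, ∑ i ∈ B, -Q x i * (f x - f i) = 0 := by
    have h := sum_comm (s := B) (t := B) (f := fun x i => -Q x i * (f x - f i))
    have h' : ∑ y ∈ B, ∑ x ∈ B, -Q x y * (f x - f y) =
        -∑ x ∈ B, ∑ i ∈ B, -Q x i * (f x - f i) := by
      simp only [← sum_neg_distrib]
      refine sum_congr rfl fun y _ => sum_congr rfl fun x _ => ?_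
      rw [hsym.apply y x]
      ring
    linarith
  simp_rw [vecMul_apply_eq_sum hsym hrow, ← sum_add_sum_compl B, sum_add_distrib, hB, zero_add]

theorem exists_vecMul_le_on (hsym : Q.IsSymm) (hoff : ∀ i j, i ≠ j → Q i j ≤ 0)
    (hrow : ∀ i, ∑ j, Q i j = 0) (hconn : (SimpleGraph.fromRel fun i j => Q i j ≠ 0).Connected)
    (D : V → ℤ) {q : V} (T : Finset V) (hq : q ∉ T) :
    ∃ f : V → ℤ, ∀ v ∈ T, (f ᵥ* Q) v ≤ D v := by
  induction T using Finset.strongInduction with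
  | H T ih =>
  rcases T.eq_empty_or_nonempty with rfl | ⟨t, ht⟩
  · exact ⟨0, by simp⟩
  obtain ⟨w, hw, u, hu, hwu⟩ := exists_edge_leaving hsym hoff hconn ht hq
  obtain ⟨f, hf⟩ := ih (T.erase w) (erase_ssubset hw) fun h => hq (mem_of_mem_erase h)
  -- Lowering `f` by `N` on `T` lowers `f ᵥ* Q` on all of `T`, and by at least `N` at `w`, which has
  -- an edge leaving `T`.
  set N := |(f ᵥ* Q) w - D w|
  refine ⟨f - N • (T : Set V).indicator 1, fun v hv => ?_⟩
  rw [sub_vecMul, smul_vecMul, Pi.sub_apply, Pi.smul_apply, indicator_vecMul_of_mem hsym hrow hv,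
    smul_eq_mul]
  have hcut : 0 ≤ ∑ i ∈ Tᶜ, -Q v i := sum_neg_nonneg_of_notMem hoff (notMem_compl.2 hv)
  have hN : 0 ≤ N := abs_nonneg _
  by_cases hvw : v = w
  · subst hvw
    have h1 : 1 ≤ ∑ i ∈ Tᶜ, -Q v i :=
      hwu.trans (neg_le_sum_neg_of_mem hoff (notMem_compl.2 hv) (mem_compl.2 hu))
    have h2 : (f ᵥ* Q) v - D v ≤ N := le_abs_self _
    nlinarith
  · have := hf v (mem_erase.2 ⟨hvw, hv⟩)
    nlinarith

-- A member of maximal total value gives the `q`-reduced divisor `D - f ᵥ* Q` equivalent to `D`.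
def effAwayFrom (Q : Matrix V V ℤ) (D : V → ℤ) (q : V) : Set (V → ℤ) :=
  {f | f q = 0 ∧ ∀ v, v ≠ q → (f ᵥ* Q) v ≤ D v}

theorem effAwayFrom_nonempty (hsym : Q.IsSymm) (hoff : ∀ i j, i ≠ j → Q i j ≤ 0)
    (hrow : ∀ i, ∑ j, Q i j = 0) (hconn : (SimpleGraph.fromRel fun i j => Q i j ≠ 0).Connected)
    (D : V → ℤ) (q : V) : (effAwayFrom Q D q).Nonempty := by
  obtain ⟨f, hf⟩ := exists_vecMul_le_on hsym hoff hrow hconn D (univ.erase q) (notMem_erase q _)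
  have hshift : ∀ v, ((fun w => f w - f q) ᵥ* Q) v = (f ᵥ* Q) v := fun v => by
    simp only [vecMul_apply_eq_sum hsym hrow, sub_sub_sub_cancel_right]
  exact ⟨fun w => f w - f q, sub_self _, fun v hv => hshift v ▸ hf v (mem_erase.2 ⟨hv, mem_univ v⟩)⟩

theorem exists_mem_Ioc_of_lt (hsym : Q.IsSymm) (hoff : ∀ i j, i ≠ j → Q i j ≤ 0)
    (hrow : ∀ i, ∑ j, Q i j = 0) (hconn : (SimpleGraph.fromRel fun i j => Q i j ≠ 0).Connected)
    {D : V → ℤ} {q : V} {f : V → ℤ} (hf : f ∈ effAwayFrom Q D q) {t : ℤ} (ht : 0 ≤ t) {v : V}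
    (hv : t + ∑ w, max (D w) 0 < f v) : ∃ c, f c ∈ Set.Ioc t (t + ∑ w, max (D w) 0) := by
  set P := ∑ w, max (D w) 0
  have hP : 0 ≤ P := sum_nonneg fun w _ => le_max_right _ _
  -- The flow of `f` out of the superlevel set `B ∌ q` is at most `P`, and it dominates the drop of
  -- `f` along an edge leaving `B`.
  set B := univ.filter fun u => t + P < f u
  have hqB : q ∉ B := by simp [B, hf.1]; linarith
  obtain ⟨a, ha, c, hc, hac⟩ :=
    exists_edge_leaving hsym hoff hconn (x := v) (by simpa [B] using hv) hqB
  have hupper : ∑ x ∈ B, (f ᵥ* Q) x ≤ P :=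
    calc ∑ x ∈ B, (f ᵥ* Q) x ≤ ∑ x ∈ B, max (D x) 0 :=
          sum_le_sum fun x hx => (hf.2 x fun h => hqB (h ▸ hx)).trans (le_max_left _ _)
      _ ≤ P := sum_le_sum_of_subset_of_nonneg (subset_univ _) fun _ _ _ => le_max_right _ _
  have hterm : ∀ x ∈ B, ∀ i ∈ Bᶜ, 0 ≤ -Q x i * (f x - f i) := fun x hx i hi => by
    have hxi : x ≠ i := fun h => mem_compl.1 hi (h ▸ hx)
    have := hoff x i hxi
    simp only [B, mem_compl, mem_filter, mem_univ, true_and, not_lt] at hx hi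
    nlinarith
  have hfa : t + P < f a := by simpa [B] using ha
  have hfc : f c ≤ t + P := by simpa [B] using hc
  have hlower : f a - f c ≤ ∑ x ∈ B, (f ᵥ* Q) x := by
    rw [sum_vecMul_eq_sum_sum_compl hsym hrow]
    calc f a - f c ≤ -Q a c * (f a - f c) := le_mul_of_one_le_left (by linarith) hac
      _ ≤ ∑ i ∈ Bᶜ, -Q a i * (f a - f i) := single_le_sum (hterm a ha) (mem_compl.2 hc)
      _ ≤ _ := single_le_sum (f := fun x => ∑ i ∈ Bᶜ, -Q x i * (f x - f i))
          (fun x hx => sum_nonneg (hterm x hx)) ha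
  exact ⟨c, by linarith, hfc⟩

-- The values of `f` above `0` have gaps of length at most `P = ∑ w, max (D w) 0`, so each of
-- `card V + 1` disjoint windows of length `P` below `f v` would need its own vertex.
theorem le_of_mem_effAwayFrom (hsym : Q.IsSymm) (hoff : ∀ i j, i ≠ j → Q i j ≤ 0)
    (hrow : ∀ i, ∑ j, Q i j = 0) (hconn : (SimpleGraph.fromRel fun i j => Q i j ≠ 0).Connected)
    {D : V → ℤ} {q : V} {f : V → ℤ} (hf : f ∈ effAwayFrom Q D q) (v : V) :
    f v ≤ (Fintype.card V + 1) * ∑ w, max (D w) 0 := by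
  set P := ∑ w, max (D w) 0
  have hP : 0 ≤ P := sum_nonneg fun w _ => le_max_right _ _
  by_contra! hv
  have hwindow : ∀ k ∈ range (Fintype.card V + 1), ∃ c, f c ∈ Set.Ioc (k * P) (k * P + P) :=
    fun k hk => exists_mem_Ioc_of_lt hsym hoff hrow hconn hf (by positivity) (v := v) <| by
      have : (k : ℤ) + 1 ≤ Fintype.card V + 1 := by
        exact_mod_cast Nat.succ_le_of_lt (mem_range.1 hk)
      nlinarith
  have : Nonempty V := ⟨v⟩
  choose! c hc using hwindow
  have hle : ∀ k ∈ range (Fintype.card V + 1), ∀ l ∈ range (Fintype.card V + 1),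
      c k = c l → k ≤ l := fun k hk l hl hkl => by
    have h1 := (hc k hk).1
    have h2 := (hc l hl).2
    rw [hkl] at h1
    by_contra! hlk
    have : (l : ℤ) + 1 ≤ k := by exact_mod_cast hlk
    nlinarith
  have := card_le_card_of_injOn c (fun k _ => mem_coe.2 (mem_univ (c k)))
    fun k hk l hl hkl => le_antisymm (hle k hk l hl hkl) (hle l hl k hk hkl.symm)
  simp at this

theorem exists_mem_effAwayFrom_forall_sum_le (hsym : Q.IsSymm)
    (hoff : ∀ i j, i ≠ j → Q i j ≤ 0) (hrow : ∀ i, ∑ j, Q i j = 0)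
    (hconn : (SimpleGraph.fromRel fun i j => Q i j ≠ 0).Connected) (D : V → ℤ) (q : V) :
    ∃ f ∈ effAwayFrom Q D q, ∀ g ∈ effAwayFrom Q D q, ∑ v, g v ≤ ∑ v, f v := by
  set S := (fun f : V → ℤ => ∑ v, f v) '' effAwayFrom Q D q
  have hbdd : BddAbove S := by
    refine ⟨Fintype.card V * ((Fintype.card V + 1) * ∑ w, max (D w) 0), ?_⟩
    rintro _ ⟨f, hf, rfl⟩
    calc ∑ v, f v ≤ ∑ _v : V, (Fintype.card V + 1) * ∑ w, max (D w) 0 :=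
          sum_le_sum fun v _ => le_of_mem_effAwayFrom hsym hoff hrow hconn hf v
      _ = _ := by simp
  obtain ⟨f, hf, hfS⟩ :=
    Int.csSup_mem ((effAwayFrom_nonempty hsym hoff hrow hconn D q).image _) hbdd
  exact ⟨f, hf, fun g hg => (le_csSup hbdd ⟨g, hg, rfl⟩).trans_eq hfS.symm⟩

-- Dhar's burning algorithm: if no vertex of `T` burned, `f` could be raised by one on `T`.
theorem exists_burning_vertex (hsym : Q.IsSymm) (hoff : ∀ i j, i ≠ j → Q i j ≤ 0)
    (hrow : ∀ i, ∑ j, Q i j = 0) {D : V → ℤ} {q : V} {f : V → ℤ} (hf : f ∈ effAwayFrom Q D q)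
    (hmax : ∀ g ∈ effAwayFrom Q D q, ∑ v, g v ≤ ∑ v, f v) {T : Finset V} (hq : q ∉ T)
    (hT : T.Nonempty) : ∃ v ∈ T, (D - f ᵥ* Q) v + 1 ≤ ∑ u ∈ Tᶜ, -Q v u := by
  by_contra! h
  have hg : f + (T : Set V).indicator 1 ∈ effAwayFrom Q D q := by
    refine ⟨by simp [hf.1, hq], fun v hv => ?_⟩
    rw [add_vecMul, Pi.add_apply]
    by_cases hvT : v ∈ T
    · rw [indicator_vecMul_of_mem hsym hrow hvT]
      have := h v hvT
      simp only [Pi.sub_apply] at this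
      linarith
    · rw [indicator_vecMul_of_notMem hsym hrow hvT]
      have := sum_neg_nonneg_of_notMem hoff hvT
      rw [sum_neg_distrib] at this
      linarith [hf.2 v hv]
  have := hmax _ hg
  rw [sum_congr rfl fun v _ => Pi.add_apply f _ v, sum_add_distrib, add_le_iff_nonpos_right,
    sum_indicator_subset _ (subset_univ T)] at this
  simp only [Pi.one_apply, sum_const, nsmul_eq_mul, mul_one, Nat.cast_nonpos,
    card_eq_zero] at this
  exact hT.ne_empty this

-- The right-hand side is twice the number of edges meeting `T`.
theorem two_mul_sum_add_one_le_of_burning (hsym : Q.IsSymm) (hrow : ∀ i, ∑ j, Q i j = 0)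
    {E : V → ℤ} {q : V}
    (hburn : ∀ T : Finset V, q ∉ T → T.Nonempty → ∃ v ∈ T, E v + 1 ≤ ∑ u ∈ Tᶜ, -Q v u)
    (T : Finset V) (hq : q ∉ T) :
    2 * ∑ v ∈ T, (E v + 1) ≤ ∑ v ∈ T, Q v v + ∑ x ∈ Tᶜ, ∑ u ∈ Tᶜ, Q x u := by
  induction T using Finset.strongInduction with
  | H T ih =>
  rcases T.eq_empty_or_nonempty with rfl | hT
  · simp [hrow]
  obtain ⟨v, hv, hEv⟩ := hburn T hq hT
  have h := ih (T.erase v) (erase_ssubset hv) fun h => hq (mem_of_mem_erase h)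
  rw [compl_erase, sum_sum_insert hsym (notMem_compl.2 hv)] at h
  rw [← add_sum_erase T _ hv, ← add_sum_erase T _ hv]
  rw [sum_neg_distrib] at hEv
  linarith

-- `hD` says `deg D ≥ g`, for the genus `g = m - card V + 1` where `Q.trace = 2 * m`.
theorem exists_vecMul_le_of_trace_le [Nonempty V] (hsym : Q.IsSymm)
    (hoff : ∀ i j, i ≠ j → Q i j ≤ 0) (hrow : ∀ i, ∑ j, Q i j = 0)
    (hconn : (SimpleGraph.fromRel fun i j => Q i j ≠ 0).Connected) (D : V → ℤ)
    (hD : Q.trace ≤ 2 * (∑ v, D v + Fintype.card V - 1)) : ∃ f : V → ℤ, f ᵥ* Q ≤ D := by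
  obtain q := Classical.arbitrary V
  obtain ⟨f, hf, hmax⟩ := exists_mem_effAwayFrom_forall_sum_le hsym hoff hrow hconn D q
  refine ⟨f, fun v => ?_⟩
  rcases eq_or_ne v q with rfl | hv
  · have h := two_mul_sum_add_one_le_of_burning hsym hrow
      (fun T hq hT => exists_burning_vertex hsym hoff hrow hf hmax hq hT) {v}ᶜ (by simp)
    have htrace : Q.trace = Q v v + ∑ u ∈ {v}ᶜ, Q u u := Fintype.sum_eq_add_sum_compl v _
    have hdeg := Fintype.sum_eq_add_sum_compl v (D - f ᵥ* Q)
    simp only [Pi.sub_apply, sum_sub_distrib, sum_vecMul_eq_zero hrow] at hdeg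
    simp only [compl_compl, sum_singleton, sum_add_distrib, sum_const, card_compl, card_singleton,
      nsmul_eq_mul, mul_one, Pi.sub_apply, sum_sub_distrib, Nat.cast_pred Fintype.card_pos] at h
    linarith
  · exact hf.2 v hv

end

section

variable {V : Type*} [Fintype V] [LinearOrder V] {Q : Matrix V V ℤ}

theorem two_mul_sum_sum_lt_eq_trace (hsym : Q.IsSymm) (hrow : ∀ i, ∑ j, Q i j = 0) :
    2 * ∑ v, ∑ u ∈ univ.filter (· < v), -Q v u = Q.trace := by
  have hsplit : ∀ v, ∑ u, -Q v u =
      ∑ u ∈ univ.filter (· < v), -Q v u + -Q v v + ∑ u ∈ univ.filter (v < ·), -Q v u := by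
    intro v
    calc ∑ u, -Q v u = ∑ u, ((if u < v then -Q v u else 0) + (if v = u then -Q v u else 0) +
          (if v < u then -Q v u else 0)) := sum_congr rfl fun u _ => by
            rcases lt_trichotomy u v with h | rfl | h
            · simp [h, h.ne', h.not_gt]
            · simp
            · simp [h, h.ne, h.not_gt]
      _ = _ := by simp only [sum_add_distrib, sum_ite_eq, mem_univ, if_true, sum_filter]
  have hswap :
      ∑ v, ∑ u ∈ univ.filter (v < ·), -Q v u = ∑ v, ∑ u ∈ univ.filter (· < v), -Q v u := by
    rw [sum_comm' (t' := univ) (s' := fun u => univ.filter (· < u)) (by simp)]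
    exact sum_congr rfl fun u _ => sum_congr rfl fun v _ => by rw [hsym.apply u v]
  have hzero : ∑ v, ∑ u, -Q v u = 0 := by simp [hrow]
  have hdiag : ∑ v, -Q v v = -Q.trace := sum_neg_distrib _
  rw [sum_congr rfl fun v _ => hsplit v, sum_add_distrib, sum_add_distrib, hswap, hdiag] at hzero
  linarith

/-- Baker–Norine's divisor `ν_<`, of degree `g - 1`: the indegrees of the acyclic orientation
induced by the vertex order, minus one. -/
def nonspecialDivisor (Q : Matrix V V ℤ) (v : V) : ℤ := (∑ u ∈ univ.filter (· < v), -Q v u) - 1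

theorem exists_nonspecialDivisor_lt_vecMul [Nonempty V] (hsym : Q.IsSymm)
    (hoff : ∀ i j, i ≠ j → Q i j ≤ 0) (hrow : ∀ i, ∑ j, Q i j = 0) (f : V → ℤ) :
    ∃ v, nonspecialDivisor Q v < (f ᵥ* Q) v := by
  -- the first vertex, in the order, at which `f` is maximal
  obtain ⟨w, -, hw⟩ := exists_max_image univ f univ_nonempty
  set A := univ.filter fun u => f u = f w
  have hA : A.Nonempty := ⟨w, by simp [A]⟩
  set v := A.min' hA
  have hvA : f v = f w := (mem_filter.1 (A.min'_mem hA)).2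
  have hle : ∀ i, f i ≤ f v := fun i => hvA ▸ hw i (mem_univ i)
  have hlt : ∀ i < v, f i < f v := fun i hi => (hle i).lt_of_ne fun h =>
    (A.min'_le i (by simp [A, h, hvA])).not_gt hi
  refine ⟨v, ?_⟩
  have hterm : ∀ i, (if i < v then -Q v i else 0) ≤ -Q v i * (f v - f i) := fun i => by
    rcases eq_or_ne i v with rfl | hiv
    · simp
    have hQ := hoff v i hiv.symm
    split_ifs with hi
    · nlinarith [hlt i hi]
    · nlinarith [hle i]
  have := sum_le_sum fun i (_ : i ∈ univ) => hterm i
  rw [← sum_filter] at this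
  rw [nonspecialDivisor, vecMul_apply_eq_sum hsym hrow]
  linarith

end

end Laplacian

theorem mem_lapLattice_iff {n : ℕ} {Q : Matrix (Fin (n+1)) (Fin (n+1)) ℤ} {x : Fin (n+1) → ℤ} :
    x ∈ lapLattice n Q ↔ ∃ f, f ᵥ* Q = x := by
  simp only [lapLattice, AddSubgroup.mem_closure_range_iff_of_fintype, vecMul_eq_sum, eq_comm]

theorem exists_mem_lapLattice_simpDist_le {n : ℕ} {Q : Matrix (Fin (n+1)) (Fin (n+1)) ℤ}
    (hsym : Q.IsSymm) (hoff : ∀ i j, i ≠ j → Q i j ≤ 0) (hrow : ∀ i, ∑ j, Q i j = 0)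
    (hconn : (SimpleGraph.fromRel fun i j => Q i j ≠ 0).Connected) {p : Fin (n+1) → ℝ}
    (hp : p ∈ H0 n) :
    ∃ q ∈ lapLattice n Q, simpDist n (intVec n q) p ≤ Q.trace / (2 * (n + 1)) := by
  set R : ℝ := Q.trace / (2 * (n + 1))
  set D : Fin (n+1) → ℤ := fun i => ⌊p i + R⌋
  obtain ⟨m, hm⟩ : ∃ m, Q.trace = 2 * m :=
    ⟨_, (Laplacian.two_mul_sum_sum_lt_eq_trace hsym hrow).symm⟩
  have hD : Q.trace ≤ 2 * (∑ i, D i + Fintype.card (Fin (n+1)) - 1) := by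
    have hfloor : ∑ i, (p i + R - 1) < ∑ i, (D i : ℝ) :=
      sum_lt_sum_of_nonempty univ_nonempty fun i _ => Int.sub_one_lt_floor _
    have hsum : ∑ i, (p i + R - 1) = m - (n + 1) := by
      rw [sum_sub_distrib, sum_add_distrib, hp.out]
      simp only [R, hm, sum_const, card_univ, Fintype.card_fin, nsmul_eq_mul]
      push_cast
      field_simp
      ring
    have : (m : ℝ) - (n + 1) < ((∑ i, D i : ℤ) : ℝ) := by push_cast; linarith
    have : m - (n + 1) < ∑ i, D i := by exact_mod_cast this
    rw [Fintype.card_fin]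
    push_cast
    omega
  obtain ⟨f, hf⟩ := Laplacian.exists_vecMul_le_of_trace_le hsym hoff hrow hconn D hD
  refine ⟨f ᵥ* Q, mem_lapLattice_iff.2 ⟨f, rfl⟩, sup'_le _ _ fun i _ => ?_⟩
  have h1 : ((f ᵥ* Q) i : ℝ) ≤ D i := by exact_mod_cast hf i
  have h2 := Int.floor_le (p i + R)
  simp only [intVec]
  linarith

theorem exists_mem_H0_forall_le_simpDist {n : ℕ} {Q : Matrix (Fin (n+1)) (Fin (n+1)) ℤ}
    (hsym : Q.IsSymm) (hoff : ∀ i j, i ≠ j → Q i j ≤ 0) (hrow : ∀ i, ∑ j, Q i j = 0) :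
    ∃ p ∈ H0 n, ∀ q ∈ lapLattice n Q, Q.trace / (2 * (n + 1)) ≤ simpDist n (intVec n q) p := by
  set ν := Laplacian.nonspecialDivisor Q
  have hν : ((∑ i, ν i : ℤ) : ℝ) = Q.trace / 2 - (n + 1) := by
    have := Laplacian.two_mul_sum_sum_lt_eq_trace hsym hrow
    simp only [ν, Laplacian.nonspecialDivisor, sum_sub_distrib, sum_const, card_univ,
      Fintype.card_fin, nsmul_eq_mul, mul_one]
    rw [← this]
    push_cast
    ring
  refine ⟨fun i => ν i - (∑ j, ν j : ℤ) / (n + 1), ?_, fun q hq => ?_⟩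
  · show ∑ i, ((ν i : ℝ) - (∑ j, ν j : ℤ) / (n + 1)) = 0
    rw [sum_sub_distrib, sum_const, card_univ, Fintype.card_fin, nsmul_eq_mul]
    push_cast
    field_simp
    ring
  obtain ⟨f, rfl⟩ := mem_lapLattice_iff.1 hq
  obtain ⟨v, hv⟩ := Laplacian.exists_nonspecialDivisor_lt_vecMul hsym hoff hrow f
  refine le_sup'_of_le _ (mem_univ v) ?_
  have h1 : (ν v : ℝ) + 1 ≤ (f ᵥ* Q) v := by exact_mod_cast hv
  have h2 : (Q.trace : ℝ) / (2 * (n + 1)) = 1 + (∑ j, ν j : ℤ) / (n + 1) := by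
    rw [hν]
    field_simp
    ring
  simp only [intVec]
  linarith

theorem covering_radius_eq_edges_over_n_plus_one_general (n : ℕ)
    (Q : Matrix (Fin (n+1)) (Fin (n+1)) ℤ) (hQ : IsConnectedLaplacian n Q) :
    sInf {R : ℝ | 0 ≤ R ∧ ∀ p ∈ H0 n, ∃ q ∈ lapLattice n Q,
        simpDist n (intVec n q) p ≤ R} =
      ((1 / 2) * ∑ i, ∑ j ∈ Finset.univ.filter (fun j => j ≠ i), -(Q i j : ℝ)) / (n + 1) := by
  obtain ⟨⟨hQsym, hoff, hrow⟩, hconn⟩ := hQ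
  have hsym : Q.IsSymm := IsSymm.ext fun i j => hQsym j i
  have hrhs : ((1 / 2) * ∑ i, ∑ j ∈ univ.filter (fun j => j ≠ i), -(Q i j : ℝ)) / (n + 1) =
      Q.trace / (2 * (n + 1)) := by
    simp only [filter_ne', ← Int.cast_neg, ← Int.cast_sum, ← Laplacian.diag_eq_sum_erase hrow]
    rw [Matrix.trace]
    push_cast
    simp only [diag_apply]
    field_simp
  obtain ⟨p₀, hp₀, hfar⟩ := exists_mem_H0_forall_le_simpDist hsym hoff hrow
  rw [hrhs]
  refine IsLeast.csInf_eq ⟨⟨by have := Laplacian.trace_nonneg hoff hrow; positivity,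
    fun p hp => exists_mem_lapLattice_simpDist_le hsym hoff hrow hconn hp⟩, ?_⟩
  rintro R ⟨-, hR⟩
  obtain ⟨q, hq, hd⟩ := hR p₀ hp₀
  exact (hfar q hq).trans hd

/-- the covering radius of the Laplacian lattice of a connected
multigraph under the simplicial distance function equals `m/(n+1) = (g+n)/(n+1)`,
where `m = (1/2) Σ_{i≠j} b_{ij}` is the number of edges. -/
theorem covering_radius_eq_edges_over_n_plus_one (n : ℕ) (hn : 1 ≤ n)
    (Q : Matrix (Fin (n+1)) (Fin (n+1)) ℤ) (hQ : IsConnectedLaplacian n Q) :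
    sInf {R : ℝ | 0 ≤ R ∧ ∀ p ∈ H0 n, ∃ q ∈ lapLattice n Q,
        simpDist n (intVec n q) p ≤ R} =
      ((1 / 2) * ∑ i, ∑ j ∈ Finset.univ.filter (fun j => j ≠ i), -(Q i j : ℝ)) / (n + 1) :=
  covering_radius_eq_edges_over_n_plus_one_general n Q hQ
end

section
/- Let Q be a connected Laplacian matrix on V = {0,…,n}. The set of extreme points of the Delaunay polytope H_{Del_G}(O) is exactly {u_S : ∅ ≠ S ⊊ V}, the map S ↦ u_S is injective on nonempty proper subsets of V, and consequently H_{Del_G}(O) has exactly 2^{n+1} − 2 extreme points (vertices). -/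
/-!
Write `φ y = ∑ i, y i • b i`. Sorting the coordinates of `y ∈ [0,1]^V` decreasingly by `σ`, Abel
summation writes `φ y` as a convex combination of the partial sums `u^σ_k`, so `H_Del(O)` is the
zonotope `φ '' [0,1]^V`, and `u_S = φ 1_S`. By the maximum principle the kernel of a connected
Laplacian consists of the constant vectors; hence for `∅ ≠ S ⊊ V` the vertex `1_S` is the only point
of the cube over `u_S`, which makes `u_S` extreme and `S ↦ u_S` injective. Conversely an extreme
point is a vertex `u^σ_k = u_S` of some simplex, and `u_∅ = u_V = 0` is not extreme, being the
midpoint of `u_S` and `u_{V \ S} = -u_S`.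
-/

open Finset

theorem Set.indicator_one_mem_Icc {ι : Type*} (s : Set ι) :
    s.indicator (1 : ι → ℝ) ∈ Set.Icc 0 1 :=
  ⟨Set.indicator_nonneg fun _ _ => zero_le_one, Set.indicator_le_self' fun _ _ => zero_le_one⟩

theorem Set.indicator_one_mem_extremePoints_Icc {ι : Type*} (s : Set ι) :
    s.indicator (1 : ι → ℝ) ∈ (Set.Icc 0 1).extremePoints ℝ := by
  classical
  rw [← Set.pi_univ_Icc, extremePoints_pi]
  intro i _
  simp only [Pi.zero_apply, Pi.one_apply, Set.extremePoints_Icc zero_le_one, Set.indicator_apply]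
  split_ifs <;> simp

theorem Fintype.linearCombination_indicator_one {R M ι : Type*} [Semiring R] [AddCommMonoid M]
    [Module R M] [Fintype ι] (b : ι → M) (s : Finset ι) :
    Fintype.linearCombination R b ((s : Set ι).indicator 1) = ∑ i ∈ s, b i := by
  classical
  simp [Fintype.linearCombination_apply, Set.indicator_apply, ite_smul]

section Convexity

variable {𝕜 E F : Type*} [Field 𝕜] [LinearOrder 𝕜] [IsStrictOrderedRing 𝕜]
  [AddCommGroup E] [Module 𝕜 E] [AddCommGroup F] [Module 𝕜 F]

theorem LinearMap.mem_extremePoints_image (φ : E →ₗ[𝕜] F) {C : Set E} (hC : Convex 𝕜 C)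
    {p : E} (hp : p ∈ C.extremePoints 𝕜) (hfib : ∀ y ∈ C, φ y = φ p → y = p) :
    φ p ∈ (φ '' C).extremePoints 𝕜 := by
  rw [mem_extremePoints_iff_left]
  refine ⟨⟨p, hp.1, rfl⟩, ?_⟩
  rintro _ ⟨y₁, hy₁, rfl⟩ _ ⟨y₂, hy₂, rfl⟩ hseg
  rw [← φ.coe_toAffineMap, ← image_openSegment] at hseg
  obtain ⟨y, hy, hφy⟩ := hseg
  obtain rfl : y = p := hfib y (hC.openSegment_subset hy₁ hy₂ hy) hφy
  rw [(mem_extremePoints_iff_left.1 hp).2 y₁ hy₁ y₂ hy₂ hy]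

theorem extremePoints_iUnion_convexHull_subset {ι : Type*} (s : ι → Set E) :
    (⋃ i, convexHull 𝕜 (s i)).extremePoints 𝕜 ⊆ ⋃ i, s i := by
  intro x hx
  obtain ⟨i, hi⟩ := Set.mem_iUnion.1 (extremePoints_subset hx)
  have hxi : x ∈ (convexHull 𝕜 (s i)).extremePoints 𝕜 :=
    inter_extremePoints_subset_extremePoints_of_subset (Set.subset_iUnion _ i) ⟨hi, hx⟩
  exact Set.mem_iUnion.2 ⟨i, extremePoints_convexHull_subset hxi⟩

theorem zero_notMem_extremePoints_of_neg_mem {A : Set E} {x : E} (hx : x ∈ A) (hnx : -x ∈ A)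
    (hx₀ : x ≠ 0) :
    (0 : E) ∉ A.extremePoints 𝕜 := fun h =>
  hx₀ ((mem_extremePoints_iff_left.1 h).2 x hx (-x) hnx
    ⟨1 / 2, 1 / 2, by norm_num, by norm_num, by norm_num, by rw [smul_neg, add_neg_cancel]⟩)

end Convexity

theorem SimpleGraph.Reachable.of_adj_imp {V : Type*} {G : SimpleGraph V} {P : V → Prop}
    (hP : ∀ u v, G.Adj u v → P u → P v) {u v : V} (h : G.Reachable u v) (hu : P u) : P v := by
  induction (SimpleGraph.reachable_iff_reflTransGen u v).1 h with
  | refl => exact hu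
  | tail hr hadj ih => exact hP _ _ hadj (ih ((SimpleGraph.reachable_iff_reflTransGen _ _).2 hr))

section PartialSums

variable {E : Type*} [AddCommGroup E] [Module ℝ E] {n : ℕ}

theorem sum_smul_mem_convexHull_partialSums {b : Fin (n + 1) → E} (hb : ∑ i, b i = 0)
    {z : Fin (n + 1) → ℝ} (hz : Antitone z) (hz₀ : 0 ≤ z (Fin.last n)) (hz₁ : z 0 ≤ 1) :
    ∑ i, z i • b i ∈ convexHull ℝ (Set.range fun k => ∑ i ∈ Iic k, b i) := by
  -- Abel summation: extending `z` past the last index by `z 0 - 1`, the weights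
  -- `z k - z (k + 1)` telescope to `1`, and the surplus `1 - z 0` lands on the last
  -- partial sum, which is `0`.
  set g : ℕ → ℝ := fun m => if h : m < n + 1 then z ⟨m, h⟩ else z 0 - 1
  set c : Fin (n + 1) → ℝ := fun k => g k - g (k + 1)
  have htel : ∀ j : Fin (n + 1), ∑ k ∈ Ici j, c k = z j - z 0 + 1 := by
    intro j
    have hmap := Finset.sum_map (Ici j) Fin.valEmbedding (fun m => g m - g (m + 1))
    rw [Fin.map_valEmbedding_Ici] at hmap
    have hg_last : g (n + 1) = z 0 - 1 := dif_neg (lt_irrefl _)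
    have hg_j : g j = z j := dif_pos j.isLt
    calc ∑ k ∈ Ici j, c k = ∑ m ∈ Ico (j : ℕ) (n + 1), (g m - g (m + 1)) := hmap.symm
      _ = -∑ m ∈ Ico (j : ℕ) (n + 1), (g (m + 1) - g m) := by
          rw [← Finset.sum_neg_distrib]; simp only [neg_sub]
      _ = z j - z 0 + 1 := by
          rw [Finset.sum_Ico_sub g (by omega), hg_last, hg_j]; ring
  have hc₀ : ∀ k, 0 ≤ c k := by
    intro k
    have hg_k : g k = z k := dif_pos k.isLt
    by_cases hk : (k : ℕ) + 1 < n + 1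
    · have hg_succ : g (k + 1) = z ⟨k + 1, hk⟩ := dif_pos hk
      simp only [c, hg_k, hg_succ, sub_nonneg]
      exact hz (Fin.mk_le_mk.mpr (Nat.le_succ k))
    · have hg_succ : g (k + 1) = z 0 - 1 := dif_neg hk
      have hk_last : k = Fin.last n := Fin.ext (by rw [Fin.val_last]; omega)
      simp only [c, hg_k, hg_succ]
      rw [hk_last]
      linarith
  have hc₁ : ∑ k, c k = 1 := by simpa using htel 0
  have hsum : ∑ k, c k • ∑ i ∈ Iic k, b i = ∑ i, z i • b i := by
    calc ∑ k, c k • ∑ i ∈ Iic k, b i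
        = ∑ i, (∑ k ∈ Ici i, c k) • b i := by
          simp_rw [Finset.smul_sum, Finset.sum_smul]
          exact Finset.sum_comm' fun k i => by simp
      _ = ∑ i, z i • b i + (1 - z 0) • ∑ i, b i := by
          simp_rw [htel, Finset.smul_sum, ← Finset.sum_add_distrib, ← add_smul]
          congr! 2; ring
      _ = ∑ i, z i • b i := by rw [hb, smul_zero, add_zero]
  rw [← hsum]
  exact (convex_convexHull ℝ _).sum_mem (fun k _ => hc₀ k) hc₁
    fun k _ => subset_convexHull ℝ _ (Set.mem_range_self k)

theorem exists_perm_sum_smul_mem_convexHull_partialSums {b : Fin (n + 1) → E}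
    (hb : ∑ i, b i = 0) {y : Fin (n + 1) → ℝ} (hy : y ∈ Set.Icc 0 1) :
    ∃ σ : Equiv.Perm (Fin (n + 1)),
      ∑ i, y i • b i ∈ convexHull ℝ (Set.range fun k => ∑ i ∈ Iic k, b (σ i)) := by
  set σ := Tuple.sort (OrderDual.toDual ∘ y)
  have hσ : Antitone (y ∘ σ) := monotone_toDual_comp_iff.mp (Tuple.monotone_sort _)
  refine ⟨σ, ?_⟩
  rw [← Equiv.sum_comp σ (fun i => y i • b i)]
  exact sum_smul_mem_convexHull_partialSums (by rwa [Equiv.sum_comp σ b]) hσ (hy.1 _) (hy.2 _)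

theorem iUnion_convexHull_partialSums_eq_image_Icc {b : Fin (n + 1) → E} (hb : ∑ i, b i = 0) :
    ⋃ σ : Equiv.Perm (Fin (n + 1)), convexHull ℝ (Set.range fun k => ∑ i ∈ Iic k, b (σ i)) =
      Fintype.linearCombination ℝ b '' Set.Icc 0 1 := by
  apply Set.Subset.antisymm
  · refine Set.iUnion_subset fun σ => convexHull_min (Set.range_subset_iff.2 fun k => ?_)
      ((convex_Icc 0 1).linear_image _)
    refine ⟨((Iic k).map σ.toEmbedding : Set (Fin (n + 1))).indicator 1, ?_, ?_⟩
    · exact Set.indicator_one_mem_Icc _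
    · rw [Fintype.linearCombination_indicator_one, Finset.sum_map]; rfl
  · rintro _ ⟨y, hy, rfl⟩
    obtain ⟨σ, hσ⟩ := exists_perm_sum_smul_mem_convexHull_partialSums hb hy
    exact Set.mem_iUnion.2 ⟨σ, by rwa [Fintype.linearCombination_apply]⟩

end PartialSums

section Laplacian

variable {n : ℕ} {Q : Matrix (Fin (n + 1)) (Fin (n + 1)) ℤ}

theorem IsLaplacian.sum_rowVec (hQ : IsLaplacian n Q) : ∑ i, rowVec n Q i = 0 := by
  funext j
  have hcol : ∑ i, Q i j = 0 := by simpa only [hQ.1 _ j] using hQ.2.2 j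
  simp only [Finset.sum_apply, rowVec, Pi.zero_apply]
  exact_mod_cast hcol

theorem HDel_eq_image_Icc (hQ : IsLaplacian n Q) :
    HDel n Q = Fintype.linearCombination ℝ (rowVec n Q) '' Set.Icc 0 1 :=
  iUnion_convexHull_partialSums_eq_image_Icc hQ.sum_rowVec

theorem uCut_eq_linearCombination (S : Finset (Fin (n + 1))) :
    uCut n Q S = Fintype.linearCombination ℝ (rowVec n Q) ((S : Set (Fin (n + 1))).indicator 1) :=
  (Fintype.linearCombination_indicator_one _ _).symm

theorem uCut_mem_HDel (hQ : IsLaplacian n Q) (S : Finset (Fin (n + 1))) :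
    uCut n Q S ∈ HDel n Q := by
  rw [HDel_eq_image_Icc hQ, uCut_eq_linearCombination]
  exact Set.mem_image_of_mem _ (Set.indicator_one_mem_Icc _)

theorem uCut_add_uCut_compl (hQ : IsLaplacian n Q) (S : Finset (Fin (n + 1))) :
    uCut n Q S + uCut n Q Sᶜ = 0 := by
  rw [uCut, uCut, Finset.sum_add_sum_compl, hQ.sum_rowVec]

theorem uPerm_eq_uCut (σ : Equiv.Perm (Fin (n + 1))) (k : Fin (n + 1)) :
    uPerm n Q σ k = uCut n Q ((Iic k).map σ.toEmbedding) := by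
  rw [uCut, Finset.sum_map]; rfl

theorem extremePoints_HDel_subset_range_uCut :
    (HDel n Q).extremePoints ℝ ⊆ Set.range (uCut n Q) := by
  refine (extremePoints_iUnion_convexHull_subset _).trans (Set.iUnion_subset fun σ => ?_)
  rintro _ ⟨k, rfl⟩
  exact ⟨_, (uPerm_eq_uCut σ k).symm⟩

theorem IsConnectedLaplacian.apply_eq_of_linearCombination_eq_zero (hQ : IsConnectedLaplacian n Q)
    {x : Fin (n + 1) → ℝ} (hx : Fintype.linearCombination ℝ (rowVec n Q) x = 0)
    (i j : Fin (n + 1)) :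
    x i = x j := by
  have hrow : ∀ c, ∑ d, (Q c d : ℝ) * (x d - x c) = 0 := by
    intro c
    have hQx : ∑ d, (Q c d : ℝ) * x d = 0 := by
      have := congrFun hx c
      simp only [Fintype.linearCombination_apply, Finset.sum_apply, Pi.smul_apply, rowVec,
        smul_eq_mul, Pi.zero_apply, hQ.1.1 _ c] at this
      simpa only [mul_comm] using this
    have hQ1 : ∑ d, (Q c d : ℝ) = 0 := by exact_mod_cast hQ.1.2.2 c
    simp only [mul_sub, Finset.sum_sub_distrib, ← Finset.sum_mul, hQx, hQ1]; ring
  obtain ⟨i₀, -, hmax⟩ := Finset.exists_max_image univ x univ_nonempty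
  -- maximum principle: at a maximum of `x` every term of the vanishing row sum `hrow` is `≥ 0`,
  -- so each neighbour is a maximum too
  have hstep : ∀ c d, (SimpleGraph.fromRel fun i j => Q i j ≠ 0).Adj c d →
      x c = x i₀ → x d = x i₀ := by
    intro c d hcd hc
    have hQcd : (Q c d : ℝ) ≠ 0 := by
      rw [SimpleGraph.fromRel_adj, hQ.1.1 d c, or_self] at hcd
      exact_mod_cast hcd.2
    have hterm : ∀ e ∈ univ, 0 ≤ (Q c e : ℝ) * (x e - x c) := by
      intro e _
      by_cases hec : e = c
      · simp [hec]
      · exact mul_nonneg_of_nonpos_of_nonpos (by exact_mod_cast hQ.1.2.1 c e (Ne.symm hec))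
          (by linarith [hmax e (mem_univ e)])
    have := (Finset.sum_eq_zero_iff_of_nonneg hterm).1 (hrow c) d (mem_univ d)
    rw [mul_eq_zero, sub_eq_zero] at this
    exact (this.resolve_left hQcd).trans hc
  have hall : ∀ c, x c = x i₀ := fun c => (hQ.2.preconnected i₀ c).of_adj_imp hstep rfl
  rw [hall i, hall j]

theorem IsConnectedLaplacian.eq_indicator_of_linearCombination_eq_uCut
    (hQ : IsConnectedLaplacian n Q) {S : Finset (Fin (n + 1))} (hS : S.Nonempty) (hSu : S ≠ univ)
    {y : Fin (n + 1) → ℝ} (hy : y ∈ Set.Icc 0 1)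
    (h : Fintype.linearCombination ℝ (rowVec n Q) y = uCut n Q S) :
    y = (S : Set (Fin (n + 1))).indicator 1 := by
  set e := (S : Set (Fin (n + 1))).indicator (1 : Fin (n + 1) → ℝ)
  have hconst : ∀ i j, y i - e i = y j - e j :=
    hQ.apply_eq_of_linearCombination_eq_zero (x := y - e)
      (by rw [map_sub, h, uCut_eq_linearCombination, sub_self])
  -- the constant `y - e` is `y i - 1 ≤ 0` at some `i ∈ S` and `y j ≥ 0` at some `j ∉ S`,
  -- so it is `0`
  obtain ⟨i, hi⟩ := hS
  obtain ⟨j, hj⟩ : ∃ j, j ∉ S := by simpa [Finset.eq_univ_iff_forall] using hSu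
  have hei : e i = 1 := Set.indicator_of_mem (Finset.mem_coe.2 hi) _
  have hej : e j = 0 := Set.indicator_of_notMem (Finset.mem_coe.not.2 hj) _
  have hyi : y i ≤ 1 := hy.2 i
  have hyj : 0 ≤ y j := hy.1 j
  funext k
  linarith [hconst k i, hconst i j]

theorem IsConnectedLaplacian.uCut_mem_extremePoints (hQ : IsConnectedLaplacian n Q)
    {S : Finset (Fin (n + 1))} (hS : S.Nonempty) (hSu : S ≠ univ) :
    uCut n Q S ∈ (HDel n Q).extremePoints ℝ := by
  rw [HDel_eq_image_Icc hQ.1, uCut_eq_linearCombination]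
  refine LinearMap.mem_extremePoints_image _ (convex_Icc 0 1)
    (Set.indicator_one_mem_extremePoints_Icc _) fun y hy h => ?_
  exact hQ.eq_indicator_of_linearCombination_eq_uCut hS hSu hy
    (h.trans (uCut_eq_linearCombination S).symm)

theorem IsConnectedLaplacian.uCut_injOn (hQ : IsConnectedLaplacian n Q) :
    Set.InjOn (uCut n Q) {S | S.Nonempty ∧ S ≠ univ} := by
  intro S hS T _ hST
  have := hQ.eq_indicator_of_linearCombination_eq_uCut hS.1 hS.2 (Set.indicator_one_mem_Icc T)
    ((uCut_eq_linearCombination T).symm.trans hST.symm)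
  exact (Finset.coe_inj.1 (Set.indicator_one_inj ℝ this)).symm

theorem IsConnectedLaplacian.uCut_ne_zero (hQ : IsConnectedLaplacian n Q)
    {S : Finset (Fin (n + 1))} (hS : S.Nonempty) (hSu : S ≠ univ) : uCut n Q S ≠ 0 := by
  intro h
  have := hQ.eq_indicator_of_linearCombination_eq_uCut hS hSu (y := 0) ⟨le_rfl, zero_le_one⟩
    (by rw [map_zero, h])
  obtain ⟨i, hi⟩ := hS
  simpa [hi] using congrFun this i

theorem IsConnectedLaplacian.zero_notMem_extremePoints_HDel (hQ : IsConnectedLaplacian n Q)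
    (hn : 1 ≤ n) : (0 : Fin (n + 1) → ℝ) ∉ (HDel n Q).extremePoints ℝ := by
  have hSu : ({0} : Finset (Fin (n + 1))) ≠ univ := fun h => by
    have : Fin.last n ∈ ({0} : Finset _) := h ▸ mem_univ _
    simp [Fin.ext_iff] at this
    omega
  refine zero_notMem_extremePoints_of_neg_mem (uCut_mem_HDel hQ.1 {0}) ?_
    (hQ.uCut_ne_zero (singleton_nonempty 0) hSu)
  rw [neg_eq_of_add_eq_zero_right (uCut_add_uCut_compl hQ.1 {0})]
  exact uCut_mem_HDel hQ.1 _

theorem IsConnectedLaplacian.extremePoints_HDel (hQ : IsConnectedLaplacian n Q) (hn : 1 ≤ n) :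
    (HDel n Q).extremePoints ℝ = uCut n Q '' {S | S.Nonempty ∧ S ≠ univ} := by
  ext x
  refine ⟨fun hx => ?_, ?_⟩
  · obtain ⟨S, rfl⟩ := extremePoints_HDel_subset_range_uCut hx
    have h0 := hQ.zero_notMem_extremePoints_HDel hn
    refine ⟨S, ⟨Finset.nonempty_iff_ne_empty.2 ?_, ?_⟩, rfl⟩ <;> rintro rfl
    · exact h0 (by simpa [uCut] using hx)
    · exact h0 (by rwa [uCut, hQ.1.sum_rowVec] at hx)
  · rintro ⟨S, ⟨hS, hSu⟩, rfl⟩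
    exact hQ.uCut_mem_extremePoints hS hSu

end Laplacian

theorem Finset.ncard_setOf_nonempty_ne_univ (α : Type*) [Fintype α] [Nonempty α] :
    {S : Finset α | S.Nonempty ∧ S ≠ univ}.ncard = 2 ^ Fintype.card α - 2 := by
  have : {S : Finset α | S.Nonempty ∧ S ≠ univ} = Set.univ \ {∅, univ} := by
    ext S; simp [Finset.nonempty_iff_ne_empty]
  rw [this, Set.ncard_sdiff (Set.subset_univ _), Set.ncard_univ, Nat.card_eq_fintype_card,
    Fintype.card_finset, Set.ncard_pair univ_nonempty.ne_empty.symm]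

/-- the extreme points of the Delaunay polytope of the origin are
exactly the points `u_S` for nonempty proper `S ⊊ V`, the map `S ↦ u_S` is
injective on these subsets, and there are exactly `2^{n+1} - 2` extreme points. -/
theorem extreme_points_of_delaunay_polytope (n : ℕ) (hn : 1 ≤ n)
    (Q : Matrix (Fin (n+1)) (Fin (n+1)) ℤ) (hQ : IsConnectedLaplacian n Q) :
    Set.extremePoints ℝ (HDel n Q) =
        {x | ∃ S : Finset (Fin (n+1)), S.Nonempty ∧ S ≠ Finset.univ ∧ x = uCut n Q S} ∧
    Set.InjOn (uCut n Q) {S : Finset (Fin (n+1)) | S.Nonempty ∧ S ≠ Finset.univ} ∧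
    (Set.extremePoints ℝ (HDel n Q)).ncard = 2 ^ (n + 1) - 2 := by
  refine ⟨?_, hQ.uCut_injOn, ?_⟩
  · rw [hQ.extremePoints_HDel hn]
    ext; simp [eq_comm, and_assoc]
  · rw [hQ.extremePoints_HDel hn, hQ.uCut_injOn.ncard_image,
      Finset.ncard_setOf_nonempty_ne_univ, Fintype.card_fin]
end
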